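/- Let 0 → L →u M →p N → 0 be a short exact sequence of ℤ-indexed cochain complexes of abelian groups (exact in every degree), let g : Ω ⟶ M be a morphism of cochain complexes, and let k be an integer. Let φ_k : L ⊕ σ_{≥k}Ω ⟶ M be the morphism (l,x) ↦ u(l) + g(x) (restricting g along the inclusion σ_{≥k}Ω ⊆ Ω), and let ψ_k : σ_{≥k}Ω ⟶ N be the restriction of p ∘ g. Then for every integer n the chain map Cone(φ_k) → Cone(ψ_k) given degreewise by (l, x, m) ↦ (x, p(m)) induces an isomorphism H^n(Cone(φ_k)) ≅ H^n(Cone(ψ_k)). -/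

import Mathlib

/-! Basic framework: ℤ-indexed cochain complexes of abelian groups, chain maps,
cohomology, mapping cones (with the sign convention
`d(a,b) = (d a, (-1)^(n+1) f a + d b)`), brutal truncations. -/

universe u

structure Cplx : Type (u + 1) where
  X : ℤ → Type u
  inst : ∀ n, AddCommGroup (X n)
  d : ∀ n, X n →+ X (n + 1)
  dsq : ∀ (n : ℤ) (x : X n), d (n + 1) (d n x) = 0

attribute [instance] Cplx.inst

namespace Cplx

/-- Transport along an equality of degrees. -/
def tr (C : Cplx) {m n : ℤ} (h : m = n) : C.X m →+ C.X n where
  toFun x := _root_.cast (congrArg C.X h) x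
  map_zero' := by subst h; rfl
  map_add' := by subst h; intros; rfl

lemma tr_tr (C : Cplx) {m n p : ℤ} (h1 : m = n) (h2 : n = p) (x : C.X m) :
    C.tr h2 (C.tr h1 x) = C.tr (h1.trans h2) x := by subst h1; subst h2; rfl

lemma d_tr (C : Cplx) {m n : ℤ} (h : m = n) (x : C.X m) :
    C.d n (C.tr h x) = C.tr (congrArg (· + 1) h) (C.d m x) := by subst h; rfl

/-- Morphisms of cochain complexes. -/
structure Hom (A B : Cplx) where
  f : ∀ n, A.X n →+ B.X n
  comm : ∀ (n : ℤ) (x : A.X n), f (n + 1) (A.d n x) = B.d n (f n x)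

def Hom.comp {A B C : Cplx} (g : Hom B C) (h : Hom A B) : Hom A C where
  f n := (g.f n).comp (h.f n)
  comm n x := by simp only [AddMonoidHom.comp_apply, h.comm, g.comm]

lemma Hom.f_tr {A B : Cplx} (g : Hom A B) {m n : ℤ} (h : m = n) (x : A.X m) :
    g.f n (A.tr h x) = B.tr h (g.f m x) := by subst h; rfl

/-- The subgroup of cocycles in degree `n`. -/
def Zc (C : Cplx) (n : ℤ) : AddSubgroup (C.X n) := (C.d n).ker

lemma mem_Zc {C : Cplx} {n : ℤ} {x : C.X n} : x ∈ C.Zc n ↔ C.d n x = 0 :=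
  AddMonoidHom.mem_ker

/-- The subgroup of coboundaries in degree `n`. -/
def Bd (C : Cplx) (n : ℤ) : AddSubgroup (C.X n) :=
  AddSubgroup.map (C.tr (show n - 1 + 1 = n by omega)) (C.d (n - 1)).range

/-- The `n`-th cohomology group. -/
def H (C : Cplx) (n : ℤ) : Type u :=
  ↥(C.Zc n) ⧸ (C.Bd n).addSubgroupOf (C.Zc n)

instance (C : Cplx) (n : ℤ) : AddCommGroup (C.H n) :=
  inferInstanceAs (AddCommGroup (↥(C.Zc n) ⧸ (C.Bd n).addSubgroupOf (C.Zc n)))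

/-- The cohomology class of a cocycle. -/
def clsOf (C : Cplx) (n : ℤ) (x : C.X n) (hx : x ∈ C.Zc n) : C.H n :=
  QuotientAddGroup.mk (⟨x, hx⟩ : C.Zc n)

/-- The map induced on cocycles by a chain map. -/
def zMap {A B : Cplx} (g : Hom A B) (n : ℤ) : ↥(A.Zc n) →+ ↥(B.Zc n) :=
  AddMonoidHom.codRestrict ((g.f n).comp (A.Zc n).subtype) (B.Zc n) (fun x => by
    have hx : A.d n ((A.Zc n).subtype x) = 0 := mem_Zc.mp x.2
    exact mem_Zc.mpr (by rw [AddMonoidHom.comp_apply, ← g.comm, hx, map_zero]))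

/-- The map induced on cohomology by a chain map. -/
def Hmap {A B : Cplx} (g : Hom A B) (n : ℤ) : A.H n →+ B.H n :=
  QuotientAddGroup.map _ _ (zMap g n) (by
    intro x hx
    rw [AddSubgroup.mem_comap, AddSubgroup.mem_addSubgroupOf]
    rw [AddSubgroup.mem_addSubgroupOf] at hx
    obtain ⟨y, hy, hxy⟩ := hx
    obtain ⟨z, rfl⟩ := hy
    have hcoe : ((zMap g n x : ↥(B.Zc n)) : B.X n) = g.f n (x : A.X n) := rfl
    rw [hcoe, ← hxy, Hom.f_tr]
    exact AddSubgroup.mem_map.mpr ⟨B.d (n - 1) (g.f (n - 1) z),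
      AddMonoidHom.mem_range.mpr ⟨g.f (n - 1) z, rfl⟩, by rw [g.comm]⟩)

/-- Direct sum of two cochain complexes. -/
def dsum (A B : Cplx) : Cplx where
  X n := A.X n × B.X n
  inst n := inferInstance
  d n := (A.d n).prodMap (B.d n)
  dsq n x := by
    show (A.d (n + 1) (A.d n x.1), B.d (n + 1) (B.d n x.2)) = 0
    rw [A.dsq, B.dsq]; rfl

/-- The morphism `L ⊕ F ⟶ M`, `(l, x) ↦ u l + g x`. -/
def sumHom {L F M : Cplx} (u : Hom L M) (g : Hom F M) : Hom (dsum L F) M where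
  f n := (u.f n).coprod (g.f n)
  comm n x := by
    show u.f (n + 1) (L.d n x.1) + g.f (n + 1) (F.d n x.2) =
      M.d n (u.f n x.1 + g.f n x.2)
    rw [map_add, u.comm, g.comm]

/-- The mapping cone of a chain map, with differential
`d (a, b) = (d a, (-1)^(n+1) • g a + d b)`. -/
def cone {A B : Cplx} (g : Hom A B) : Cplx where
  X n := A.X n × B.X (n - 1)
  inst n := inferInstance
  d n := AddMonoidHom.mk' (fun p =>
      (A.d n p.1,
        B.tr (show n = n + 1 - 1 by omega) ((Int.negOnePow (n + 1) : ℤ) • g.f n p.1) +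
          B.tr (show n - 1 + 1 = n + 1 - 1 by omega) (B.d (n - 1) p.2)))
    (fun p q => by
      refine Prod.ext (map_add _ _ _) ?_
      show B.tr _ ((Int.negOnePow (n + 1) : ℤ) • g.f n (p.1 + q.1)) +
          B.tr _ (B.d (n - 1) (p.2 + q.2)) = _
      rw [map_add (g.f n), smul_add, map_add, map_add (B.d (n - 1)), map_add]
      simp only [Prod.snd_add]
      abel)
  dsq n p := by
    refine Prod.ext (A.dsq n p.1) ?_
    show B.tr (show n + 1 = n + 1 + 1 - 1 by omega)
          ((Int.negOnePow (n + 1 + 1) : ℤ) • g.f (n + 1) (A.d n p.1)) +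
        B.tr (show n + 1 - 1 + 1 = n + 1 + 1 - 1 by omega)
          (B.d (n + 1 - 1)
            (B.tr (show n = n + 1 - 1 by omega) ((Int.negOnePow (n + 1) : ℤ) • g.f n p.1) +
              B.tr (show n - 1 + 1 = n + 1 - 1 by omega) (B.d (n - 1) p.2))) = 0
    rw [map_add (B.d (n + 1 - 1)), d_tr, d_tr, map_add (B.tr _), tr_tr, tr_tr,
      B.dsq (n - 1) p.2, map_zero, add_zero, g.comm n p.1,
      map_zsmul (B.d n)]
    show B.tr (show n + 1 = n + 1 + 1 - 1 by omega)
        ((Int.negOnePow (n + 1 + 1) : ℤ) • B.d n (g.f n p.1)) +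
      B.tr (show n + 1 = n + 1 + 1 - 1 by omega)
        ((Int.negOnePow (n + 1) : ℤ) • B.d n (g.f n p.1)) = 0
    rw [← map_add, ← add_smul]
    have : ((Int.negOnePow (n + 1 + 1) : ℤ) + (Int.negOnePow (n + 1) : ℤ)) = 0 := by
      rw [Int.negOnePow_succ (n + 1), Units.val_neg, neg_add_cancel]
    rw [this, zero_smul, map_zero]

/-- A subcomplex determined by a `d`-stable family of subgroups. -/
def subCplx (C : Cplx) (S : ∀ n, AddSubgroup (C.X n))
    (hS : ∀ (n : ℤ) (x : C.X n), x ∈ S n → C.d n x ∈ S (n + 1)) : Cplx where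
  X n := S n
  inst n := inferInstance
  d n := AddMonoidHom.codRestrict ((C.d n).comp (S n).subtype) (S (n + 1))
    (fun x => hS n x.1 x.2)
  dsq n x := Subtype.ext (C.dsq n x.1)

/-- The inclusion of a subcomplex. -/
def subIncl (C : Cplx) (S : ∀ n, AddSubgroup (C.X n))
    (hS : ∀ (n : ℤ) (x : C.X n), x ∈ S n → C.d n x ∈ S (n + 1)) :
    Hom (subCplx C S hS) C where
  f n := (S n).subtype
  comm _ _ := rfl

/-- The quotient complex by a `d`-stable family of subgroups. -/
def quotCplx (C : Cplx) (S : ∀ n, AddSubgroup (C.X n))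
    (hS : ∀ (n : ℤ) (x : C.X n), x ∈ S n → C.d n x ∈ S (n + 1)) : Cplx where
  X n := C.X n ⧸ S n
  inst n := inferInstance
  d n := QuotientAddGroup.map (S n) (S (n + 1)) (C.d n) (fun x hx => by
    rw [AddSubgroup.mem_comap]; exact hS n x hx)
  dsq n x := by
    induction x using QuotientAddGroup.induction_on with
    | H z =>
      show QuotientAddGroup.map _ _ _ _ (QuotientAddGroup.map _ _ _ _ ((z : C.X n ⧸ S n))) = 0
      rw [QuotientAddGroup.map_mk, QuotientAddGroup.map_mk, C.dsq]
      rfl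

/-- The projection onto a quotient complex. -/
def quotProj (C : Cplx) (S : ∀ n, AddSubgroup (C.X n))
    (hS : ∀ (n : ℤ) (x : C.X n), x ∈ S n → C.d n x ∈ S (n + 1)) :
    Hom C (quotCplx C S hS) where
  f n := QuotientAddGroup.mk' (S n)
  comm _ _ := rfl

/-- The family of subgroups defining the brutal truncation `σ_{≥k}`. -/
def geSub (F : Cplx) (k n : ℤ) : AddSubgroup (F.X n) := if k ≤ n then ⊤ else ⊥

lemma geSub_stable (F : Cplx) (k : ℤ) :
    ∀ (n : ℤ) (x : F.X n), x ∈ geSub F k n → F.d n x ∈ geSub F k (n + 1) := by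
  intro n x hx
  by_cases h : k ≤ n + 1
  · simp [geSub, h]
  · have h' : ¬ k ≤ n := by omega
    simp only [geSub, h', if_neg, if_false, AddSubgroup.mem_bot] at hx
    simp [geSub, h, hx]

/-- The brutal truncation `σ_{≥k} F` (a subcomplex of `F`). -/
def truncGE (F : Cplx) (k : ℤ) : Cplx := subCplx F (geSub F k) (geSub_stable F k)

/-- The inclusion `σ_{≥k} F ⟶ F`. -/
def truncGEincl (F : Cplx) (k : ℤ) : Hom (truncGE F k) F :=
  subIncl F (geSub F k) (geSub_stable F k)

/-- The brutal truncation `σ_{<k} F` (a quotient complex of `F`). -/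
def truncLT (F : Cplx) (k : ℤ) : Cplx := quotCplx F (geSub F k) (geSub_stable F k)

/-- The projection `F ⟶ σ_{<k} F`. -/
def truncLTproj (F : Cplx) (k : ℤ) : Hom F (truncLT F k) :=
  quotProj F (geSub F k) (geSub_stable F k)

end Cplx

/-! The chain map `θ : (l, x, m) ↦ (x, p m)` is surjective in every degree, and its kernel
consists of the triples `(l, 0, u l')`, a copy of the cone of `id_L`, hence acyclic: a kernel
cocycle `(l, 0, u l')` forces `l = ± d l'` by injectivity of `u`, and is then the coboundary
of `(± l', 0, 0)`. The long exact cohomology sequence of `0 → ker θ → Cone(φ) → Cone(ψ) → 0`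
then makes `θ` a quasi-isomorphism. The truncation plays no role: the argument works for any
complex `F` in place of `σ_{≥k}Ω`. -/

namespace Cplx

lemma mem_Bd {C : Cplx} {n : ℤ} {x : C.X n} :
    x ∈ C.Bd n ↔ ∃ y : C.X (n - 1), C.tr (by omega) (C.d (n - 1) y) = x := by
  constructor
  · rintro ⟨-, ⟨y, rfl⟩, rfl⟩
    exact ⟨y, rfl⟩
  · rintro ⟨y, rfl⟩
    exact ⟨C.d (n - 1) y, ⟨y, rfl⟩, rfl⟩

lemma d_tr_d (C : Cplx) {m n : ℤ} (h : m + 1 = n) (x : C.X m) :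
    C.d n (C.tr h (C.d m x)) = 0 := by
  subst h
  exact C.dsq m x

lemma tr_self (C : Cplx) {n : ℤ} (h : n = n) (x : C.X n) : C.tr h x = x := rfl

lemma clsOf_eq_zero_iff {C : Cplx} {n : ℤ} {x : C.X n} (hx : x ∈ C.Zc n) :
    C.clsOf n x hx = 0 ↔ x ∈ C.Bd n :=
  (QuotientAddGroup.eq_zero_iff _).trans AddSubgroup.mem_addSubgroupOf

lemma H_induction {C : Cplx} {n : ℤ} {P : C.H n → Prop}
    (h : ∀ (x : C.X n) (hx : x ∈ C.Zc n), P (C.clsOf n x hx)) (c : C.H n) : P c :=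
  QuotientAddGroup.induction_on c fun ⟨x, hx⟩ => h x hx

lemma Hom.map_mem_Zc {A B : Cplx} (θ : Hom A B) {n : ℤ} {x : A.X n} (hx : x ∈ A.Zc n) :
    θ.f n x ∈ B.Zc n :=
  mem_Zc.mpr (by rw [← θ.comm, mem_Zc.mp hx, map_zero])

lemma Hmap_clsOf {A B : Cplx} (θ : Hom A B) {n : ℤ} {x : A.X n} (hx : x ∈ A.Zc n) :
    Hmap θ n (A.clsOf n x hx) = B.clsOf n (θ.f n x) (θ.map_mem_Zc hx) := rfl

/-- `hker` says that the kernel of `θ`, as a subcomplex of `A`, is acyclic. -/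
theorem Hmap_bijective_of_surjective {A B : Cplx} (θ : Hom A B)
    (hsurj : ∀ n, Function.Surjective (θ.f n))
    (hker : ∀ (n : ℤ) (a : A.X n), A.d n a = 0 → θ.f n a = 0 →
      ∃ c : A.X (n - 1), θ.f (n - 1) c = 0 ∧ A.tr (by omega) (A.d (n - 1) c) = a)
    (n : ℤ) : Function.Bijective (Hmap θ n) := by
  constructor
  · refine (injective_iff_map_eq_zero _).mpr (H_induction fun a ha hθa => ?_)
    rw [Hmap_clsOf, clsOf_eq_zero_iff, mem_Bd] at hθa
    obtain ⟨y, hy⟩ := hθa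
    obtain ⟨a', rfl⟩ := hsurj (n - 1) y
    obtain ⟨c, -, hdc⟩ := hker n (a - A.tr (by omega) (A.d (n - 1) a'))
      (by rw [map_sub, mem_Zc.mp ha, d_tr_d, sub_zero])
      (by rw [map_sub, Hom.f_tr, θ.comm, hy, sub_self])
    rw [clsOf_eq_zero_iff, mem_Bd]
    exact ⟨a' + c, by rw [map_add, map_add, hdc, add_sub_cancel]⟩
  · refine H_induction fun b hb => ?_
    obtain ⟨a, rfl⟩ := hsurj n b
    obtain ⟨c, hc, hdc⟩ := hker (n + 1) (A.d n a) (A.dsq n a)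
      (by rw [θ.comm, mem_Zc.mp hb])
    have hza : a - A.tr (by omega) c ∈ A.Zc n := by
      rw [mem_Zc, map_sub, d_tr, ← hdc, sub_self]
    refine ⟨A.clsOf n _ hza, ?_⟩
    rw [Hmap_clsOf]
    congr 1
    rw [map_sub, Hom.f_tr, hc, map_zero, sub_zero]

lemma negOnePow_smul_negOnePow_smul {G : Type*} [AddCommGroup G] (a : ℤ) (x : G) :
    (Int.negOnePow a : ℤ) • (Int.negOnePow a : ℤ) • x = x := by
  rw [smul_smul, ← Units.val_mul, Int.units_mul_self, Units.val_one, one_smul]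

lemma dsum_tr (A B : Cplx) {m n : ℤ} (h : m = n) (z : (dsum A B).X m) :
    (dsum A B).tr h z = (A.tr h z.1, B.tr h z.2) := by
  subst h
  rfl

lemma cone_tr_d {A B : Cplx} (φ : Hom A B) {m n : ℤ} (h : m + 1 = n) (c : (cone φ).X m) :
    (cone φ).tr h ((cone φ).d m c) =
      (A.tr h (A.d m c.1),
        B.tr (by omega) ((Int.negOnePow n : ℤ) • φ.f m c.1) +
          B.tr (by omega) (B.d (m - 1) c.2)) := by
  subst h
  rfl

lemma cone_d_snd {A B : Cplx} (φ : Hom A B) (n : ℤ) (z : (cone φ).X n) :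
    B.tr (by omega) ((cone φ).d n z).2 =
      (Int.negOnePow (n + 1) : ℤ) • φ.f n z.1 + B.tr (by omega) (B.d (n - 1) z.2) := by
  show B.tr _ (B.tr _ _ + B.tr _ _) = _
  rw [map_add, tr_tr, tr_tr]
  rfl

lemma cone_d_eq_zero_snd {A B : Cplx} {φ : Hom A B} {n : ℤ} {z : (cone φ).X n}
    (hz : (cone φ).d n z = 0) :
    (Int.negOnePow (n + 1) : ℤ) • φ.f n z.1 + B.tr (by omega) (B.d (n - 1) z.2) = 0 := by
  rw [← cone_d_snd, hz]
  exact map_zero _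

section ShortExact

variable {L M N F : Cplx} {u : Hom L M} {p : Hom M N}

lemma map_map_eq_zero_of_ker_eq_range (hexact : ∀ n, (p.f n).ker = (u.f n).range)
    (n : ℤ) (l : L.X n) : p.f n (u.f n l) = 0 :=
  (hexact n).ge ⟨l, rfl⟩

variable (u p) (g : Hom F M)

def coneSumHomMap (hpu : ∀ n (l : L.X n), p.f n (u.f n l) = 0) :
    Hom (cone (sumHom u g)) (cone (p.comp g)) where
  f n := (AddMonoidHom.snd (L.X n) (F.X n)).prodMap (p.f (n - 1))
  comm n z := by
    refine Prod.ext rfl ?_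
    show p.f _ (M.tr _ _ + M.tr _ _) = N.tr _ _ + N.tr _ _
    rw [map_add, Hom.f_tr, Hom.f_tr, map_zsmul, p.comm]
    show N.tr _ (_ • p.f n (u.f n _ + g.f n _)) + _ = _
    rw [map_add, hpu, zero_add]
    rfl

lemma coneSumHomMap_surjective (hsurj : ∀ n, Function.Surjective (p.f n))
    (hpu : ∀ n (l : L.X n), p.f n (u.f n l) = 0) (n : ℤ) :
    Function.Surjective ((coneSumHomMap u p g hpu).f n) := by
  rintro ⟨x, ν⟩
  obtain ⟨m, rfl⟩ := hsurj (n - 1) ν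
  exact ⟨((0, x), m), rfl⟩

lemma coneSumHomMap_ker_acyclic (hinj : ∀ n, Function.Injective (u.f n))
    (hexact : ∀ n, (p.f n).ker = (u.f n).range) (n : ℤ) (z : (cone (sumHom u g)).X n)
    (hz : (cone (sumHom u g)).d n z = 0)
    (hθz : (coneSumHomMap u p g (map_map_eq_zero_of_ker_eq_range hexact)).f n z = 0) :
    ∃ c : (cone (sumHom u g)).X (n - 1),
      (coneSumHomMap u p g (map_map_eq_zero_of_ker_eq_range hexact)).f (n - 1) c = 0 ∧
        (cone (sumHom u g)).tr (by omega) ((cone (sumHom u g)).d (n - 1) c) = z := by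
  obtain ⟨⟨l, x⟩, m⟩ := z
  obtain ⟨rfl, hm⟩ : x = 0 ∧ p.f (n - 1) m = 0 := Prod.ext_iff.mp hθz
  obtain ⟨l', rfl⟩ : m ∈ (u.f (n - 1)).range := hexact (n - 1) ▸ hm
  have hdl' : L.tr (by omega) (L.d (n - 1) l') = (Int.negOnePow n : ℤ) • l := by
    have hl : (Int.negOnePow (n + 1) : ℤ) • l + L.tr (by omega) (L.d (n - 1) l') = 0 := by
      apply hinj n
      have h := cone_d_eq_zero_snd hz
      dsimp only at h
      have hsum : (sumHom u g).f n (l, 0) = u.f n l := by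
        show u.f n l + g.f n 0 = u.f n l
        rw [map_zero, add_zero]
      rw [hsum] at h
      rw [map_add, map_zsmul, Hom.f_tr, u.comm, map_zero, ← h]
    rw [Int.negOnePow_succ, Units.val_neg, neg_smul, neg_add_eq_zero] at hl
    exact hl.symm
  refine ⟨(((Int.negOnePow n : ℤ) • l', 0), 0), Prod.ext rfl (map_zero (p.f (n - 1 - 1))), ?_⟩
  refine (cone_tr_d _ _ _).trans (Prod.ext ?_ ?_)
  · refine (dsum_tr L F _ _).trans (Prod.ext ?_ ?_)
    · show L.tr _ (L.d (n - 1) ((Int.negOnePow n : ℤ) • l')) = l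
      rw [map_zsmul, map_zsmul, hdl', negOnePow_smul_negOnePow_smul]
    · show F.tr _ (F.d (n - 1) 0) = 0
      rw [map_zero, map_zero]
  · show M.tr _ ((Int.negOnePow n : ℤ) • (u.f (n - 1) ((Int.negOnePow n : ℤ) • l') +
      g.f (n - 1) 0)) + M.tr _ (M.d (n - 1 - 1) 0) = u.f (n - 1) l'
    rw [tr_self, map_zero (g.f (n - 1)), add_zero, map_zsmul, negOnePow_smul_negOnePow_smul,
      map_zero, map_zero, add_zero]

theorem coneSumHomMap_Hmap_bijective (hinj : ∀ n, Function.Injective (u.f n))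
    (hexact : ∀ n, (p.f n).ker = (u.f n).range) (hsurj : ∀ n, Function.Surjective (p.f n))
    (n : ℤ) :
    Function.Bijective (Hmap (coneSumHomMap u p g (map_map_eq_zero_of_ker_eq_range hexact)) n) :=
  Hmap_bijective_of_surjective _ (coneSumHomMap_surjective u p g hsurj _)
    (coneSumHomMap_ker_acyclic u p g hinj hexact) n

end ShortExact

end Cplx

open Cplx in
/-- `H^n(Cone(φ_k)) ≅ H^n(Cone(ψ_k))` via `(l, x, m) ↦ (x, p m)`. -/
theorem stmt5 (L M N Ω : Cplx) (u : Cplx.Hom L M) (p : Cplx.Hom M N)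
    (hinj : ∀ n, Function.Injective (u.f n))
    (hexact : ∀ n, (p.f n).ker = (u.f n).range)
    (hsurj : ∀ n, Function.Surjective (p.f n))
    (g : Cplx.Hom Ω M) (k : ℤ) :
    ∃ θ : Cplx.Hom (cone (sumHom u (g.comp (truncGEincl Ω k))))
        (cone ((p.comp g).comp (truncGEincl Ω k))),
      (∀ (n : ℤ) (x : (cone (sumHom u (g.comp (truncGEincl Ω k)))).X n),
          θ.f n x = (x.1.2, p.f (n - 1) x.2)) ∧
      (∀ n, Function.Bijective (Hmap θ n)) :=
  ⟨coneSumHomMap u p _ (map_map_eq_zero_of_ker_eq_range hexact), fun _ _ => rfl,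
    coneSumHomMap_Hmap_bijective u p _ hinj hexact hsurj⟩
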